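/- arXiv:2603.11785 — 6 statements merged into one kernel-verified Lean document; each statement's English description precedes it below -/
import Mathlib

section
/- Fix a real number x and a real θ with 0 < θ < π. The real function θ ↦ 2·arctan( sin(θ/2) / (cos(θ/2) + exp x) ) is differentiable at θ with derivative (1 + exp(x)·cos(θ/2)) / (1 + 2·exp(x)·cos(θ/2) + exp(2x)); moreover, as a complex number this derivative equals (1/2)·( 1/(1 + Complex.exp(x − I·θ/2)) + 1/(1 + Complex.exp(x + I·θ/2)) ). -/
lemma aux4 (s c a : ℝ) (h : s ^ 2 + c ^ 2 = 1) (hne : c + a ≠ 0)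
    (hD : (1 : ℝ) + 2 * a * c + a ^ 2 ≠ 0) :
    (1 + a * c) / (1 + 2 * a * c + a ^ 2) =
      2 * (1 / (1 + (s / (c + a)) ^ 2) *
        ((c * (1 / 2) * (c + a) - s * (-s * (1 / 2))) / (c + a) ^ 2)) := by
  have h2 : 1 + (s / (c + a)) ^ 2 = (1 + 2 * a * c + a ^ 2) / (c + a) ^ 2 := by
    field_simp
    linear_combination h
  have key : c * (1 / 2) * (c + a) - s * (-s * (1 / 2)) = (1 + a * c) / 2 := by
    linear_combination h / 2
  rw [h2, key]
  field_simp

theorem stmt_4 (x θ : ℝ) (hθ0 : 0 < θ) (hθπ : θ < Real.pi) :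
    HasDerivAt (fun t : ℝ => 2 * Real.arctan (Real.sin (t / 2) / (Real.cos (t / 2) + Real.exp x)))
      ((1 + Real.exp x * Real.cos (θ / 2)) /
        (1 + 2 * Real.exp x * Real.cos (θ / 2) + Real.exp (2 * x))) θ ∧
    (((1 + Real.exp x * Real.cos (θ / 2)) /
        (1 + 2 * Real.exp x * Real.cos (θ / 2) + Real.exp (2 * x)) : ℝ) : ℂ) =
      (1 / 2) * (1 / (1 + Complex.exp ((x : ℂ) - Complex.I * θ / 2)) +
        1 / (1 + Complex.exp ((x : ℂ) + Complex.I * θ / 2))) := by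
  have hc : 0 < Real.cos (θ / 2) := by
    apply Real.cos_pos_of_mem_Ioo
    constructor <;> [linarith [Real.pi_pos]; linarith]
  have hapos : 0 < Real.exp x := Real.exp_pos x
  have hpyth : Real.sin (θ / 2) ^ 2 + Real.cos (θ / 2) ^ 2 = 1 := Real.sin_sq_add_cos_sq _
  have hne : Real.cos (θ / 2) + Real.exp x ≠ 0 := by positivity
  have hexp2 : Real.exp (2 * x) = Real.exp x ^ 2 := by
    rw [two_mul, Real.exp_add]; ring
  have hDpos : 0 < 1 + 2 * Real.exp x * Real.cos (θ / 2) + Real.exp (2 * x) := by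
    positivity
  constructor
  · have hhalf : HasDerivAt (fun t : ℝ => t / 2) (1 / 2) θ := by
      simpa using (hasDerivAt_id θ).div_const 2
    have hsin : HasDerivAt (fun t : ℝ => Real.sin (t / 2)) (Real.cos (θ / 2) * (1 / 2)) θ :=
      by have := (Real.hasDerivAt_sin (θ / 2)).comp θ hhalf; exact this
    have hcos : HasDerivAt (fun t : ℝ => Real.cos (t / 2) + Real.exp x)
        (-Real.sin (θ / 2) * (1 / 2)) θ := by
      simpa using ((Real.hasDerivAt_cos (θ / 2)).comp θ hhalf).add_const (Real.exp x)
    have := ((hsin.div hcos hne).arctan).const_mul (2 : ℝ)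
    refine this.congr_deriv ?_
    rw [hexp2]
    exact (aux4 _ _ _ hpyth hne (by nlinarith)).symm
  · have h1 : Complex.exp ((x : ℂ) + Complex.I * θ / 2) =
        (Real.exp x : ℂ) * (Real.cos (θ / 2) + Real.sin (θ / 2) * Complex.I) := by
      have e : (x : ℂ) + Complex.I * θ / 2 = (x : ℂ) + ((θ / 2 : ℝ) : ℂ) * Complex.I := by
        push_cast; ring
      rw [e, Complex.exp_add, Complex.exp_mul_I, ← Complex.ofReal_exp, ← Complex.ofReal_cos,
        ← Complex.ofReal_sin]
    have h2 : Complex.exp ((x : ℂ) - Complex.I * θ / 2) =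
        (Real.exp x : ℂ) * (Real.cos (θ / 2) - Real.sin (θ / 2) * Complex.I) := by
      have e : (x : ℂ) - Complex.I * θ / 2 = (x : ℂ) + ((-(θ / 2) : ℝ) : ℂ) * Complex.I := by
        push_cast; ring
      rw [e, Complex.exp_add, Complex.exp_mul_I, ← Complex.ofReal_exp, ← Complex.ofReal_cos,
        ← Complex.ofReal_sin]
      push_cast [Real.cos_neg, Real.sin_neg]
      ring
    have hz : (1 : ℂ) + (Real.exp x : ℂ) * (Real.cos (θ / 2) + Real.sin (θ / 2) * Complex.I) ≠ 0 := by
      intro h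
      have := congrArg Complex.re h
      simp [Complex.add_re, Complex.mul_re, Complex.exp_ofReal_re, Complex.cos_ofReal_re,
        Complex.sin_ofReal_im, Complex.ofReal_re, Complex.ofReal_im] at this
      have e1 : (Complex.cos ((θ : ℂ) / 2)).re = Real.cos (θ / 2) := by
        rw [show ((θ : ℂ) / 2) = ((θ / 2 : ℝ) : ℂ) by push_cast; ring]
        exact Complex.cos_ofReal_re _
      have e2 : (Complex.sin ((θ : ℂ) / 2)).im = 0 := by
        rw [show ((θ : ℂ) / 2) = ((θ / 2 : ℝ) : ℂ) by push_cast; ring]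
        exact Complex.sin_ofReal_im _
      rw [e1, e2] at this
      nlinarith
    have hw : (1 : ℂ) + (Real.exp x : ℂ) * (Real.cos (θ / 2) - Real.sin (θ / 2) * Complex.I) ≠ 0 := by
      intro h
      have := congrArg Complex.re h
      simp [Complex.add_re, Complex.mul_re, Complex.sub_re, Complex.exp_ofReal_re,
        Complex.cos_ofReal_re, Complex.sin_ofReal_im, Complex.ofReal_re, Complex.ofReal_im] at this
      have e1 : (Complex.cos ((θ : ℂ) / 2)).re = Real.cos (θ / 2) := by
        rw [show ((θ : ℂ) / 2) = ((θ / 2 : ℝ) : ℂ) by push_cast; ring]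
        exact Complex.cos_ofReal_re _
      have e2 : (Complex.sin ((θ : ℂ) / 2)).im = 0 := by
        rw [show ((θ : ℂ) / 2) = ((θ / 2 : ℝ) : ℂ) by push_cast; ring]
        exact Complex.sin_ofReal_im _
      rw [e1, e2] at this
      nlinarith
    rw [h1, h2]
    have hpc : ((Real.sin (θ / 2) : ℂ)) ^ 2 + ((Real.cos (θ / 2) : ℂ)) ^ 2 = 1 := by
      exact_mod_cast hpyth
    rw [div_add_div _ _ hw hz]
    have hden : ((1 : ℂ) + (Real.exp x : ℂ) * (Real.cos (θ / 2) - Real.sin (θ / 2) * Complex.I)) *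
        ((1 : ℂ) + (Real.exp x : ℂ) * (Real.cos (θ / 2) + Real.sin (θ / 2) * Complex.I)) =
        1 + 2 * (Real.exp x : ℂ) * (Real.cos (θ / 2) : ℂ) + (Real.exp x : ℂ) ^ 2 := by
      linear_combination ((Real.exp x : ℂ)) ^ 2 * hpc - (Real.exp x : ℂ) ^ 2 * (Real.sin (θ / 2) : ℂ) ^ 2 * Complex.I_sq
    have hnum : (1 : ℂ) * ((1 : ℂ) + (Real.exp x : ℂ) * (Real.cos (θ / 2) + Real.sin (θ / 2) * Complex.I)) +
        ((1 : ℂ) + (Real.exp x : ℂ) * (Real.cos (θ / 2) - Real.sin (θ / 2) * Complex.I)) * 1 =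
        2 + 2 * (Real.exp x : ℂ) * (Real.cos (θ / 2) : ℂ) := by ring
    rw [hden, hnum]
    have hDne : ((1 + 2 * Real.exp x * Real.cos (θ / 2) + Real.exp x ^ 2 : ℝ) : ℂ) ≠ 0 :=
      Complex.ofReal_ne_zero.2 (by positivity)
    push_cast at hDne
    rw [Complex.ofReal_div]
    push_cast [hexp2]
    field_simp [hDne]
end

section
/- For every real c with 0 < c ≤ π/2, the following contour-shift identity of convergent integrals holds: ∫₀^∞ x/(1 + Complex.exp(x + I·c)) dx = ∫₀^∞ (x − I·c)/(1 + Complex.exp x) dx + ∫₀^c (t − c)/(1 + Complex.exp(I·t)) dt, where x and t range over real variables, I is the imaginary unit, and Complex.exp is the complex exponential. (All three integrals converge: the integrands' denominators never vanish since |Im| of the exponent stays below π, and for real x the integrands decay like x·e^{−x}.) -/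
open MeasureTheory
open Complex Filter Set intervalIntegral Topology

private lemma aux_denom (z : ℂ) (h0 : 0 ≤ z.im) (h : z.im ≤ Real.pi / 2) :
    Real.exp z.re ≤ ‖1 + Complex.exp z‖ := by
  have hcos : 0 ≤ Real.cos z.im :=
    Real.cos_nonneg_of_mem_Icc ⟨by linarith [Real.pi_pos], h⟩
  have hsq := Real.sin_sq_add_cos_sq z.im
  have hE := Real.exp_pos z.re
  rw [Complex.norm_def,
    Real.le_sqrt hE.le (Complex.normSq_nonneg _)]
  simp only [Complex.normSq_apply, Complex.add_re, Complex.add_im, Complex.one_re,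
    Complex.one_im, Complex.exp_re, Complex.exp_im]
  nlinarith [hE, hcos, hsq]

private lemma aux_ne (z : ℂ) (h0 : 0 ≤ z.im) (h : z.im ≤ Real.pi / 2) :
    1 + Complex.exp z ≠ 0 := by
  intro hz
  have := aux_denom z h0 h
  rw [hz] at this
  simp at this
  linarith [Real.exp_pos z.re]

theorem stmt_5 (c : ℝ) (hc0 : 0 < c) (hc : c ≤ Real.pi / 2) :
    ∫ x in Set.Ioi (0 : ℝ), (x : ℂ) / (1 + Complex.exp ((x : ℂ) + Complex.I * c)) =
      (∫ x in Set.Ioi (0 : ℝ), ((x : ℂ) - Complex.I * c) / (1 + Complex.exp (x : ℂ))) +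
        ∫ t in (0 : ℝ)..c, ((t : ℂ) - (c : ℂ)) / (1 + Complex.exp (Complex.I * t)) := by
  set f : ℂ → ℂ := fun z => (z - I * c) / (1 + Complex.exp z) with hf
  -- the rectangle identity for each R
  have key : ∀ R : ℝ,
      ∫ x in (0:ℝ)..R, (x : ℂ) / (1 + Complex.exp ((x : ℂ) + Complex.I * c)) =
        (∫ x in (0:ℝ)..R, ((x : ℂ) - Complex.I * c) / (1 + Complex.exp (x : ℂ))) +
        (I • (∫ y in (0:ℝ)..c, ((R : ℂ) + y * I - I * c) / (1 + Complex.exp ((R : ℂ) + y * I))) +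
          ∫ t in (0 : ℝ)..c, ((t : ℂ) - (c : ℂ)) / (1 + Complex.exp (Complex.I * t))) := by
    intro R
    have hdiff : DifferentiableOn ℂ f
        (Set.uIcc (0:ℂ).re (R + c*I : ℂ).re ×ℂ Set.uIcc (0:ℂ).im (R + c*I : ℂ).im) := by
      intro z hz
      have hz2 : z.im ∈ Set.uIcc (0:ℂ).im (R + c*I : ℂ).im := hz.2
      simp only [Complex.zero_im, Complex.add_im, Complex.ofReal_im, Complex.mul_im,
        Complex.I_re, Complex.I_im, Complex.ofReal_re, Complex.zero_re] at hz2
      rw [Set.uIcc_of_le (by linarith)] at hz2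
      have h0 : 0 ≤ z.im := by simpa using hz2.1
      have h1 : z.im ≤ Real.pi / 2 := le_trans (by simpa using hz2.2) hc
      exact ((differentiableAt_id.sub (differentiableAt_const _)).div
        ((differentiableAt_const _).add differentiableAt_id.cexp)
        (aux_ne z h0 h1)).differentiableWithinAt
    have h0 := Complex.integral_boundary_rect_eq_zero_of_differentiableOn f 0 (R + c*I) hdiff
    simp only [Complex.zero_re, Complex.zero_im, Complex.add_re, Complex.add_im,
      Complex.ofReal_re, Complex.ofReal_im, Complex.mul_re, Complex.mul_im,
      Complex.I_re, Complex.I_im, mul_zero, mul_one, zero_mul, zero_sub, sub_zero,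
      zero_add, add_zero, neg_zero, Complex.ofReal_zero] at h0
    have e1 : (∫ x in (0:ℝ)..R, f (↑x + ↑c*I)) =
        ∫ x in (0:ℝ)..R, (x:ℂ)/(1 + Complex.exp ((x:ℂ) + I*↑c)) := by
      apply integral_congr; intro x _
      simp only [hf]; rw [mul_comm (c:ℂ) I]; congr 1; ring
    have e3 : I • (∫ y in (0:ℝ)..c, f (↑y * I)) =
        -∫ t in (0:ℝ)..c, ((t:ℂ) - ↑c)/(1 + Complex.exp (I*↑t)) := by
      have e4 : (∫ y in (0:ℝ)..c, f (↑y*I)) =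
          I * ∫ t in (0:ℝ)..c, ((t:ℂ) - ↑c)/(1 + Complex.exp (I*↑t)) := by
        rw [← intervalIntegral.integral_const_mul]; apply integral_congr; intro t _
        simp only [hf]; rw [mul_comm (t:ℂ) I, ← mul_div_assoc]
        congr 1; ring
      rw [e4, smul_eq_mul, ← mul_assoc, Complex.I_mul_I, neg_one_mul]
    rw [e1, e3] at h0
    simp only [hf] at h0
    linear_combination -h0
  -- integrability of the two improper integrands
  have hxexp : IntegrableOn (fun x : ℝ => x * Real.exp (-x)) (Ioi 0) := by
    have h := integrableOn_rpow_mul_exp_neg_rpow (s := 1) (p := 1) (by norm_num) zero_lt_one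
    refine h.congr_fun (fun x hx => ?_) measurableSet_Ioi
    norm_num [Real.rpow_natCast]
  have hexp : IntegrableOn (fun x : ℝ => Real.exp (-x)) (Ioi 0) := by
    have := exp_neg_integrableOn_Ioi 0 (one_pos (α := ℝ))
    refine this.congr_fun (fun x hx => by simp only [neg_one_mul]) measurableSet_Ioi
  have hint1 : IntegrableOn (fun x : ℝ => (x : ℂ) / (1 + Complex.exp ((x : ℂ) + Complex.I * c)))
      (Ioi 0) := by
    have him : ∀ x : ℝ, ((x : ℂ) + Complex.I * c).im = c := by intro x; simp
    have hre : ∀ x : ℝ, ((x : ℂ) + Complex.I * c).re = x := by intro x; simp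
    have hcont : Continuous fun x : ℝ => (x : ℂ) / (1 + Complex.exp ((x : ℂ) + Complex.I * c)) := by
      apply Continuous.div
      · exact Complex.continuous_ofReal
      · exact continuous_const.add (Complex.continuous_exp.comp
          (Complex.continuous_ofReal.add continuous_const))
      · intro x
        exact aux_ne _ (by rw [him]; exact hc0.le) (by rw [him]; exact hc)
    refine Integrable.mono' hxexp hcont.aestronglyMeasurable ?_
    filter_upwards [ae_restrict_mem measurableSet_Ioi] with x hx
    rw [norm_div, Complex.norm_real, Real.norm_eq_abs, abs_of_pos hx]
    rw [Real.exp_neg, ← div_eq_mul_inv]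
    apply div_le_div_of_nonneg_left hx.le (Real.exp_pos x)
    calc Real.exp x = Real.exp ((x : ℂ) + Complex.I * c).re := by rw [hre]
      _ ≤ _ := aux_denom _ (by rw [him]; exact hc0.le) (by rw [him]; exact hc)
  have hint2 : IntegrableOn
      (fun x : ℝ => ((x : ℂ) - Complex.I * c) / (1 + Complex.exp (x : ℂ))) (Ioi 0) := by
    have hcont : Continuous fun x : ℝ =>
        ((x : ℂ) - Complex.I * c) / (1 + Complex.exp (x : ℂ)) := by
      apply Continuous.div
      · exact Complex.continuous_ofReal.sub continuous_const
      · exact continuous_const.add (Complex.continuous_exp.comp Complex.continuous_ofReal)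
      · intro x
        exact aux_ne _ (by simp) (by simp; linarith [Real.pi_nonneg])
    have hb : IntegrableOn (fun x : ℝ => (x + c) * Real.exp (-x)) (Ioi 0) := by
      refine IntegrableOn.congr_fun (hxexp.add (hexp.const_mul c)) (fun x hx => by simp; ring) measurableSet_Ioi
    refine Integrable.mono' hb hcont.aestronglyMeasurable ?_
    filter_upwards [ae_restrict_mem measurableSet_Ioi] with x hx
    rw [norm_div, Real.exp_neg, ← div_eq_mul_inv]
    apply div_le_div₀ (by have := Set.mem_Ioi.mp hx; positivity) ?_ (Real.exp_pos x) ?_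
    · calc ‖(x:ℂ) - Complex.I * c‖ ≤ ‖(x:ℂ)‖ + ‖Complex.I * (c:ℂ)‖ := norm_sub_le _ _
        _ = |x| + |c| := by simp
        _ = x + c := by rw [abs_of_pos hx, abs_of_pos hc0]
    · have := aux_denom (x : ℂ) (by simp) (by simp; linarith [Real.pi_nonneg])
      simpa using this
  -- the side term tends to zero
  have t3 : Tendsto (fun R : ℝ => I • ∫ y in (0:ℝ)..c,
      ((R : ℂ) + y * I - I * c) / (1 + Complex.exp ((R : ℂ) + y * I))) atTop (𝓝 0) := by
    apply squeeze_zero_norm' (a := fun R => ((R + c) / Real.exp R) * |c - 0|)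
    · filter_upwards [eventually_ge_atTop (0:ℝ)] with R hR
      rw [norm_smul, Complex.norm_I, one_mul]
      apply intervalIntegral.norm_integral_le_of_norm_le_const
      intro y hy
      rw [Set.uIoc_of_le hc0.le] at hy
      have him : ((R:ℂ) + ↑y*I).im = y := by simp
      have hre : ((R:ℂ) + ↑y*I).re = R := by simp
      rw [norm_div]
      apply div_le_div₀ (by positivity) ?_ (Real.exp_pos R) ?_
      · calc ‖(R:ℂ) + ↑y*I - I*↑c‖ = ‖(R:ℂ) + ((y - c : ℝ):ℂ)*I‖ := by
              congr 1; push_cast; ring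
          _ ≤ ‖(R:ℂ)‖ + ‖((y - c : ℝ):ℂ)*I‖ := norm_add_le _ _
          _ = |R| + |y - c| := by
              rw [norm_mul, Complex.norm_I, mul_one, Complex.norm_real, Complex.norm_real,
                Real.norm_eq_abs, Real.norm_eq_abs]
          _ ≤ R + c := by
              rw [_root_.abs_of_nonneg hR, abs_sub_comm, _root_.abs_of_nonneg (by linarith [hy.2])]
              linarith [hy.1]
      · calc Real.exp R = Real.exp ((R:ℂ) + ↑y*I).re := by rw [hre]
          _ ≤ _ := aux_denom _ (by rw [him]; exact hy.1.le)
              (by rw [him]; exact hy.2.trans hc)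
    · have a := Real.tendsto_pow_mul_exp_neg_atTop_nhds_zero 1
      have b := Real.tendsto_exp_neg_atTop_nhds_zero
      have l1 : Tendsto (fun R : ℝ => (R + c) / Real.exp R) atTop (𝓝 0) := by
        have := (a.add (b.const_mul c))
        simp only [mul_zero, add_zero] at this
        refine this.congr fun R => ?_
        rw [pow_one, Real.exp_neg]; ring
      simpa using l1.mul_const |c - 0|
  -- assemble by taking R → ∞
  have t1 := intervalIntegral_tendsto_integral_Ioi 0 hint1 (tendsto_id (x := atTop))
  have t2 := intervalIntegral_tendsto_integral_Ioi 0 hint2 (tendsto_id (x := atTop))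
  have t4 := t2.add (t3.add (tendsto_const_nhds
    (x := ∫ t in (0:ℝ)..c, ((t : ℂ) - (c : ℂ)) / (1 + Complex.exp (Complex.I * t)))
    (f := atTop)))
  have t5 := t4.congr (fun R => (key R).symm)
  have := tendsto_nhds_unique t1 t5
  rw [this, zero_add]
end

section
/- For every real c with 0 ≤ c ≤ π/2, the contribution of the far vertical edge of the rectangular contour vanishes in the limit: the function R ↦ ∫₀^c (R + I·t − I·c)/(1 + Complex.exp(R + I·t)) dt (integral over the real variable t ∈ [0, c]) tends to 0 as the real number R tends to +∞. -/
open MeasureTheory Filter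

theorem stmt_6 (c : ℝ) (hc0 : 0 ≤ c) (hc : c ≤ Real.pi / 2) :
    Tendsto (fun R : ℝ =>
        ∫ t in (0 : ℝ)..c, ((R : ℂ) + Complex.I * t - Complex.I * c) /
          (1 + Complex.exp ((R : ℂ) + Complex.I * t)))
      atTop (nhds 0) := by
  rw [tendsto_zero_iff_norm_tendsto_zero]
  have hbound : ∀ᶠ R : ℝ in atTop,
      ‖∫ t in (0 : ℝ)..c, ((R : ℂ) + Complex.I * t - Complex.I * c) /
          (1 + Complex.exp ((R : ℂ) + Complex.I * t))‖ ≤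
        (2 * ((R + 2 * c) * Real.exp (-R))) * c := by
    filter_upwards [eventually_ge_atTop (1 : ℝ)] with R hR
    have hR0 : (0 : ℝ) ≤ R := le_trans zero_le_one hR
    have hexp2 : (2 : ℝ) ≤ Real.exp R := by
      calc (2 : ℝ) ≤ Real.exp 1 := by
            have := Real.add_one_le_exp (1 : ℝ); linarith
        _ ≤ Real.exp R := Real.exp_le_exp.2 hR
    have key : ∀ t ∈ Set.uIoc (0 : ℝ) c,
        ‖((R : ℂ) + Complex.I * t - Complex.I * c) /
            (1 + Complex.exp ((R : ℂ) + Complex.I * t))‖ ≤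
          2 * ((R + 2 * c) * Real.exp (-R)) := by
      intro t ht
      rw [Set.uIoc_of_le hc0] at ht
      obtain ⟨ht0', htc⟩ := ht
      have ht0 : (0:ℝ) ≤ t := ht0'.le
      have hnum : ‖(R : ℂ) + Complex.I * t - Complex.I * c‖ ≤ R + 2 * c := by
        calc ‖(R : ℂ) + Complex.I * t - Complex.I * c‖
            ≤ ‖(R : ℂ) + Complex.I * t‖ + ‖Complex.I * (c : ℂ)‖ := norm_sub_le _ _
          _ ≤ (‖(R : ℂ)‖ + ‖Complex.I * (t : ℂ)‖) + ‖Complex.I * (c : ℂ)‖ := by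
              gcongr; exact norm_add_le _ _
          _ = |R| + |t| + |c| := by
              simp [norm_mul, Complex.norm_real]
          _ ≤ R + 2 * c := by
              rw [abs_of_nonneg hR0, abs_of_nonneg ht0, abs_of_nonneg hc0]
              linarith
      have hden : Real.exp R / 2 ≤ ‖1 + Complex.exp ((R : ℂ) + Complex.I * t)‖ := by
        have h1 : ‖Complex.exp ((R : ℂ) + Complex.I * t)‖ = Real.exp R := by
          rw [Complex.norm_exp]
          simp
        have h2 : Real.exp R - 1 ≤ ‖1 + Complex.exp ((R : ℂ) + Complex.I * t)‖ := by
          have := norm_sub_le (1 + Complex.exp ((R : ℂ) + Complex.I * t)) 1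
          simp only [add_sub_cancel_left] at this
          rw [h1, norm_one] at this
          linarith
        linarith
      have hdenpos : (0 : ℝ) < Real.exp R / 2 := by positivity
      rw [norm_div]
      calc ‖(R : ℂ) + Complex.I * t - Complex.I * c‖ /
            ‖1 + Complex.exp ((R : ℂ) + Complex.I * t)‖
          ≤ (R + 2 * c) / (Real.exp R / 2) := by
            apply div_le_div₀ (by positivity) hnum hdenpos hden
        _ = 2 * ((R + 2 * c) * Real.exp (-R)) := by
            rw [Real.exp_neg]; field_simp
    calc ‖∫ t in (0 : ℝ)..c, ((R : ℂ) + Complex.I * t - Complex.I * c) /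
            (1 + Complex.exp ((R : ℂ) + Complex.I * t))‖
        ≤ 2 * ((R + 2 * c) * Real.exp (-R)) * |c - 0| :=
          intervalIntegral.norm_integral_le_of_norm_le_const key
      _ = 2 * ((R + 2 * c) * Real.exp (-R)) * c := by
          rw [sub_zero, abs_of_nonneg hc0]
  have hlim : Tendsto (fun R : ℝ => (2 * ((R + 2 * c) * Real.exp (-R))) * c)
      atTop (nhds 0) := by
    have h1 : Tendsto (fun R : ℝ => R * Real.exp (-R)) atTop (nhds 0) := by
      simpa using Real.tendsto_pow_mul_exp_neg_atTop_nhds_zero 1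
    have h2 : Tendsto (fun R : ℝ => Real.exp (-R)) atTop (nhds 0) :=
      Real.tendsto_exp_neg_atTop_nhds_zero
    have h3 : Tendsto (fun R : ℝ => (R + 2 * c) * Real.exp (-R)) atTop (nhds 0) := by
      have := h1.add (h2.const_mul (2 * c))
      simpa [add_mul, mul_comm, mul_assoc, mul_left_comm] using this
    simpa using (h3.const_mul 2).mul_const c
  exact squeeze_zero' (Eventually.of_forall fun R => norm_nonneg _) hbound hlim
end

section
/- For every real θ with 0 < θ ≤ π, one has ∫₀^∞ x·( 1/(1 + Complex.exp(x − I·θ/2)) + 1/(1 + Complex.exp(x + I·θ/2)) ) dx = π²/6 − θ²/8, where the integral is over the real variable x ∈ (0,∞), I is the imaginary unit and Complex.exp is the complex exponential. (The integrand is in fact real-valued and the integral converges absolutely.) -/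
open MeasureTheory

open Real Set

lemma xexp_integrable {r : ℝ} (hr : 0 < r) :
    IntegrableOn (fun x : ℝ => x * Real.exp (-(r * x))) (Set.Ioi 0) := by
  have h := integrableOn_rpow_mul_exp_neg_mul_rpow (by norm_num : (-1:ℝ) < 1)
    (by norm_num : (0:ℝ) < 1) hr
  simpa [Real.rpow_one, neg_mul] using h

lemma xexp_integral {r : ℝ} (hr : 0 < r) :
    ∫ x in Set.Ioi 0, x * Real.exp (-(r * x)) = 1 / r ^ 2 := by
  have h := Real.integral_rpow_mul_exp_neg_mul_Ioi (by norm_num : (0:ℝ) < 2) hr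
  rw [show (2:ℝ) - 1 = 1 by norm_num] at h
  simp only [Real.rpow_one] at h
  rw [h, Real.Gamma_two]
  rw [show ((1:ℝ)/r) ^ (2:ℝ) = (1/r)^(2:ℕ) by rw [← Real.rpow_natCast]; norm_num]
  field_simp

noncomputable def G (a : ℝ) (n : ℕ) (x : ℝ) : ℂ :=
  -((x:ℂ) * (-Complex.exp (-((x:ℂ) + Complex.I * a)))^(n+1))

lemma G_eq (a : ℝ) (n : ℕ) (x : ℝ) :
    G a n x = ((x * Real.exp (-(((n:ℝ)+1) * x)) : ℝ) : ℂ) •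
      ((-1:ℂ)^n * Complex.exp (-((n:ℂ)+1) * (Complex.I * a))) := by
  have h1 : (-Complex.exp (-((x:ℂ) + Complex.I * a)))^(n+1)
      = (-1:ℂ)^(n+1) * Complex.exp (((n:ℂ)+1) * (-((x:ℂ) + Complex.I * a))) := by
    rw [neg_pow, ← Complex.exp_nat_mul]
    push_cast
    ring_nf
  rw [G, h1, smul_eq_mul]
  have h2 : (((n:ℂ))+1) * (-((x:ℂ) + Complex.I * a))
      = ((-(((n:ℝ)+1) * x) : ℝ) : ℂ) + (-((n:ℂ)+1) * (Complex.I * a)) := by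
    push_cast; ring
  rw [h2, Complex.exp_add]
  push_cast [Complex.ofReal_exp]
  ring

lemma npos (n : ℕ) : (0:ℝ) < (n:ℝ) + 1 := by positivity

lemma G_integrable (a : ℝ) (n : ℕ) : IntegrableOn (G a n) (Set.Ioi 0) := by
  rw [funext (G_eq a n)]
  exact ((xexp_integrable (npos n)).ofReal).smul_const _

lemma G_integral (a : ℝ) (n : ℕ) :
    ∫ x in Set.Ioi 0, G a n x
      = ((1 / ((n:ℝ)+1)^2 : ℝ) : ℂ) * ((-1:ℂ)^n * Complex.exp (-((n:ℂ)+1) * (Complex.I * a))) := by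
  rw [funext (G_eq a n), integral_smul_const]
  rw [show (∫ x in Set.Ioi (0:ℝ), ((x * Real.exp (-(((n:ℝ)+1) * x)) : ℝ) : ℂ))
      = ((∫ x in Set.Ioi (0:ℝ), x * Real.exp (-(((n:ℝ)+1) * x)) : ℝ) : ℂ) from integral_ofReal,
    xexp_integral (npos n), smul_eq_mul]

lemma G_norm_integral (a : ℝ) (n : ℕ) :
    ∫ x in Set.Ioi 0, ‖G a n x‖ = 1 / ((n:ℝ)+1)^2 := by
  have h : ∀ x ∈ Set.Ioi (0:ℝ), ‖G a n x‖ = x * Real.exp (-(((n:ℝ)+1) * x)) := by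
    intro x hx
    rw [G_eq, norm_smul]
    have : ‖(-1:ℂ)^n * Complex.exp (-((n:ℂ)+1) * (Complex.I * a))‖ = 1 := by
      rw [norm_mul, norm_pow, norm_neg, norm_one, one_pow, one_mul,
        Complex.norm_exp]
      have : (-((n:ℂ)+1) * (Complex.I * a)).re = 0 := by simp
      rw [this, Real.exp_zero]
    rw [this, mul_one, Complex.norm_real, Real.norm_eq_abs, abs_of_nonneg (mul_nonneg (le_of_lt hx) (Real.exp_pos _).le)]
  rw [setIntegral_congr_fun measurableSet_Ioi h, xexp_integral (npos n)]

lemma exp_norm_lt {x : ℝ} (hx : 0 < x) (a : ℝ) :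
    ‖-Complex.exp (-((x:ℂ) + Complex.I * a))‖ < 1 := by
  rw [norm_neg, Complex.norm_exp]
  have : (-((x:ℂ) + Complex.I * a)).re = -x := by simp
  rw [this]
  exact Real.exp_lt_one_iff.mpr (by linarith)

lemma one_add_exp_ne {x : ℝ} (hx : 0 < x) (a : ℝ) :
    1 + Complex.exp ((x:ℂ) + Complex.I * a) ≠ 0 := by
  intro h
  have h2 : Complex.exp ((x:ℂ) + Complex.I * a) = -1 := by linear_combination h
  have : ‖Complex.exp ((x:ℂ) + Complex.I * a)‖ = 1 := by rw [h2]; simp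
  rw [Complex.norm_exp] at this
  have hre : ((x:ℂ) + Complex.I * a).re = x := by simp
  rw [hre] at this
  have := Real.exp_lt_exp.mpr hx
  rw [Real.exp_zero] at this
  linarith [this, ‹Real.exp x = 1›]

lemma G_hasSum {x : ℝ} (hx : 0 < x) (a : ℝ) :
    HasSum (fun n => G a n x)
      ((x:ℂ) * (1 / (1 + Complex.exp ((x:ℂ) + Complex.I * a)))) := by
  set s : ℂ := (x:ℂ) + Complex.I * a with hs
  set w : ℂ := -Complex.exp (-s) with hw
  have hw1 : ‖w‖ < 1 := exp_norm_lt hx a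
  have hgeo := (hasSum_geometric_of_norm_lt_one hw1).mul_left ((x:ℂ) * w)
  have hG : (fun n => G a n x) = fun n => -((x:ℂ) * w * w ^ n) := by
    funext n
    rw [G]
    ring
  rw [hG]
  convert hgeo.neg using 1
  · rfl
  have hd : 1 - w ≠ 0 := by
    intro h
    rw [sub_eq_zero] at h
    rw [← h] at hw1
    simp at hw1
  have hes : Complex.exp s ≠ 0 := Complex.exp_ne_zero s
  have h1e : 1 + Complex.exp s ≠ 0 := one_add_exp_ne hx a
  rw [hw, Complex.exp_neg]
  have hE2 : Complex.exp s + Complex.exp s ^ 2 ≠ 0 := by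
    have : Complex.exp s + Complex.exp s ^ 2 = Complex.exp s * (1 + Complex.exp s) := by ring
    rw [this]
    exact mul_ne_zero hes h1e
  field_simp
  rw [eq_div_iff (by rw [sub_neg_eq_add, add_comm]; exact h1e)]
  ring
open MeasureTheory Set Real

lemma bern2 (y : ℝ) :
    (Polynomial.map (algebraMap ℚ ℝ) (Polynomial.bernoulli 2)).eval y = y^2 - y + 1/6 := by
  simp [Polynomial.bernoulli, Finset.sum_range_succ, Polynomial.eval_monomial,
    bernoulli]
  ring

lemma cos_sum {y : ℝ} (hy : y ∈ Set.Icc (0:ℝ) 1) :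
    HasSum (fun n : ℕ => 1 / (n:ℝ)^2 * Real.cos (2*π*n*y)) (π^2 * (y^2 - y + 1/6)) := by
  have h := hasSum_one_div_nat_pow_mul_cos (k := 1) one_ne_zero hy
  rw [bern2] at h
  convert h using 2 <;> norm_num
  · ring


open Real in
lemma alt_cos_sum {t : ℝ} (ht0 : 0 < t) (ht : t ≤ π/2) :
    HasSum (fun n : ℕ => (-1:ℝ)^(n+1) * (1 / (n:ℝ)^2 * Real.cos (n*t)))
      (π^2/12 - t^2/4) := by
  have hπ : (0:ℝ) < π := Real.pi_pos
  set y : ℝ := t / (2*π) with hy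
  have hy1 : y ∈ Set.Icc (0:ℝ) 1 := by
    constructor
    · positivity
    · rw [div_le_one (by positivity)]; nlinarith
  have hy2 : 2*y ∈ Set.Icc (0:ℝ) 1 := by
    constructor
    · positivity
    · rw [hy]; rw [show 2 * (t/(2*π)) = t/π by field_simp]
      rw [div_le_one hπ]; linarith
  have harg : ∀ n : ℕ, 2*π*n*y = n*t := by
    intro n; rw [hy]; field_simp
  have harg2 : ∀ n : ℕ, 2*π*n*(2*y) = n*(2*t) := by
    intro n; rw [hy]; field_simp
  have hA : HasSum (fun n : ℕ => 1 / (n:ℝ)^2 * Real.cos (n*t))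
      (π^2 * (y^2 - y + 1/6)) := by
    have := cos_sum hy1
    simp_rw [harg] at this; exact this
  have hB : HasSum (fun n : ℕ => 1 / (n:ℝ)^2 * Real.cos (n*(2*t)))
      (π^2 * ((2*y)^2 - 2*y + 1/6)) := by
    have := cos_sum hy2
    simp_rw [harg2] at this; exact this
  set h : ℕ → ℝ := fun m => if Even m then 1 / (m:ℝ)^2 * Real.cos (m*t) else 0 with hh
  have hinj : Function.Injective (fun n : ℕ => 2*n) := fun a b hab => by simp only at hab; omega
  have hcomp : (h ∘ fun n : ℕ => 2*n)
      = fun n : ℕ => (1 / (n:ℝ)^2 * Real.cos (n*(2*t))) / 4 := by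
    funext n
    simp only [Function.comp, hh, if_pos (even_two_mul n)]
    push_cast
    rw [show ((2:ℝ)*n)*t = n*(2*t) by ring]
    rw [mul_pow]
    ring
  have hEven : HasSum h (π^2 * ((2*y)^2 - 2*y + 1/6) / 4) := by
    refine (Function.Injective.hasSum_iff hinj ?_).mp ?_
    · intro m hm
      rw [hh]
      simp only
      rw [if_neg]
      intro ⟨k, hk⟩
      exact hm ⟨k, by simpa using by omega⟩
    · rw [hcomp]
      exact hB.div_const 4
  have halt := hA.sub (hEven.mul_left 2)
  have heq : (fun n : ℕ => 1 / (n:ℝ)^2 * Real.cos (n*t) - 2 * h n)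
      = fun n : ℕ => (-1:ℝ)^(n+1) * (1 / (n:ℝ)^2 * Real.cos (n*t)) := by
    funext n
    rcases Nat.even_or_odd n with he | ho
    · rw [hh]; simp only [if_pos he]
      rw [(he.add_one).neg_one_pow]
      ring
    · rw [hh]; simp only [if_neg (Nat.not_even_iff_odd.mpr ho)]
      rw [(ho.add_one).neg_one_pow]
      ring
  rw [heq] at halt
  convert halt using 1
  · rfl
  have : t = 2*π*y := by rw [hy]; field_simp
  rw [this]; ring

open Real in
lemma final_real_sum {t : ℝ} (ht0 : 0 < t) (ht : t ≤ π/2) :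
    HasSum (fun n : ℕ => (-1:ℝ)^n * (2 * (1/((n:ℝ)+1)^2 * Real.cos (((n:ℝ)+1)*t))))
      (π^2/6 - t^2/2) := by
  have h := alt_cos_sum ht0 ht
  have h1 := (hasSum_nat_add_iff' (f := fun n : ℕ =>
      (-1:ℝ)^(n+1) * (1 / (n:ℝ)^2 * Real.cos (n*t))) 1).mpr h
  simp only [Finset.range_one, Finset.sum_singleton] at h1
  norm_num at h1
  have h2 := h1.mul_left 2
  rw [show π^2/6 - t^2/2 = 2*(π^2/12 - t^2/4) by ring]
  refine h2.congr_fun fun n => ?_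
  push_cast
  rw [show n+1+1 = n+2 from rfl, pow_add]
  norm_num
  ring

lemma term_eq (θ : ℝ) (n : ℕ) :
    ((1 / ((n:ℝ)+1)^2 : ℝ) : ℂ) * ((-1:ℂ)^n * Complex.exp (-((n:ℂ)+1) * (Complex.I * ((-(θ/2) : ℝ) : ℂ))))
      + ((1 / ((n:ℝ)+1)^2 : ℝ) : ℂ) * ((-1:ℂ)^n * Complex.exp (-((n:ℂ)+1) * (Complex.I * ((θ/2 : ℝ) : ℂ))))
      = (((-1:ℝ)^n * (2 * (1/((n:ℝ)+1)^2 * Real.cos (((n:ℝ)+1)*(θ/2)))) : ℝ) : ℂ) := by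
  set z : ℂ := ((n:ℂ)+1) * ((θ:ℂ)/2) with hz
  have e1 : -((n:ℂ)+1) * (Complex.I * ((-(θ/2) : ℝ) : ℂ)) = z * Complex.I := by
    rw [hz]; push_cast; ring
  have e2 : -((n:ℂ)+1) * (Complex.I * ((θ/2 : ℝ) : ℂ)) = -z * Complex.I := by
    rw [hz]; push_cast; ring
  rw [e1, e2, ← mul_add, ← mul_add, ← Complex.two_cos]
  have e3 : Complex.cos z = ((Real.cos (((n:ℝ)+1)*(θ/2)) : ℝ) : ℂ) := by
    rw [Complex.ofReal_cos, hz]; push_cast; ring_nf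
  rw [e3]
  push_cast
  ring

theorem stmt_7 (θ : ℝ) (hθ0 : 0 < θ) (hθπ : θ ≤ Real.pi) :
    ∫ x in Set.Ioi (0 : ℝ), (x : ℂ) *
        (1 / (1 + Complex.exp ((x : ℂ) - Complex.I * θ / 2)) +
          1 / (1 + Complex.exp ((x : ℂ) + Complex.I * θ / 2))) =
      (Real.pi : ℂ) ^ 2 / 6 - (θ : ℂ) ^ 2 / 8 := by
  set a₁ : ℝ := -(θ/2) with ha₁
  set a₂ : ℝ := θ/2 with ha₂
  set F : ℕ → ℝ → ℂ := fun n x => G a₁ n x + G a₂ n x with hF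
  have hint : ∀ n, IntegrableOn (F n) (Set.Ioi 0) := fun n =>
    (G_integrable a₁ n).add (G_integrable a₂ n)
  have hbase : Summable (fun n : ℕ => 1/((n:ℝ)+1)^2 + 1/((n:ℝ)+1)^2) := by
    have h := summable_one_div_nat_pow (p := 2) |>.mpr one_lt_two
    have h1 := (summable_nat_add_iff (f := fun n : ℕ => 1/(n:ℝ)^2) 1).mpr h
    have h2 : Summable (fun n : ℕ => 1/((n:ℝ)+1)^2) := by
      refine h1.congr fun n => ?_
      push_cast; ring
    exact h2.add h2
  have hsum : Summable (fun n : ℕ => ∫ x in Set.Ioi (0:ℝ), ‖F n x‖) := by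
    refine Summable.of_nonneg_of_le
      (fun n => integral_nonneg fun x => norm_nonneg _) (fun n => ?_) hbase
    calc ∫ x in Set.Ioi (0:ℝ), ‖F n x‖
        ≤ ∫ x in Set.Ioi (0:ℝ), (‖G a₁ n x‖ + ‖G a₂ n x‖) := by
          refine integral_mono (hint n).norm
            ((G_integrable a₁ n).norm.add (G_integrable a₂ n).norm) fun x => ?_
          exact norm_add_le _ _
      _ = (∫ x in Set.Ioi (0:ℝ), ‖G a₁ n x‖) + ∫ x in Set.Ioi (0:ℝ), ‖G a₂ n x‖ :=
          integral_add (G_integrable a₁ n).norm (G_integrable a₂ n).norm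
      _ = 1/((n:ℝ)+1)^2 + 1/((n:ℝ)+1)^2 := by
          rw [G_norm_integral, G_norm_integral]
  have key := hasSum_integral_of_summable_integral_norm hint hsum
  -- identify the integral of the tsum with the LHS
  have hLHS : (∫ x in Set.Ioi (0:ℝ), ∑' n, F n x)
      = ∫ x in Set.Ioi (0 : ℝ), (x : ℂ) *
        (1 / (1 + Complex.exp ((x : ℂ) - Complex.I * θ / 2)) +
          1 / (1 + Complex.exp ((x : ℂ) + Complex.I * θ / 2))) := by
    refine setIntegral_congr_fun measurableSet_Ioi fun x hx => ?_
    have hx' : (0:ℝ) < x := hx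
    have h1 := (G_hasSum hx' a₁).add (G_hasSum hx' a₂)
    rw [h1.tsum_eq]
    have e1 : (x:ℂ) + Complex.I * (a₁ : ℂ) = (x : ℂ) - Complex.I * θ / 2 := by
      simp only [ha₁, ha₂]; push_cast; ring
    have e2 : (x:ℂ) + Complex.I * (a₂ : ℂ) = (x : ℂ) + Complex.I * θ / 2 := by
      simp only [ha₂]; push_cast; ring
    rw [e1, e2]
    ring
  rw [hLHS] at key
  -- identify each term of the sum
  have hterm : (fun n => ∫ x in Set.Ioi (0:ℝ), F n x)
      = fun n : ℕ => (((-1:ℝ)^n * (2 * (1/((n:ℝ)+1)^2 * Real.cos (((n:ℝ)+1)*(θ/2)))) : ℝ) : ℂ) := by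
    funext n
    rw [hF]
    rw [integral_add (G_integrable a₁ n) (G_integrable a₂ n), G_integral, G_integral]
    exact term_eq θ n
  rw [hterm] at key
  -- the value of the sum
  have hreal := final_real_sum (t := θ/2) (by linarith) (by linarith)
  have hcplx := Complex.hasSum_ofReal.mpr hreal
  have := hcplx.unique key
  rw [← this]
  push_cast
  ring
end

section
/- For every real θ with 0 ≤ θ ≤ π, one has ∫₀^∞ x·( 2 + 2·exp(x)·cos(θ/2) ) / ( 1 + 2·exp(x)·cos(θ/2) + exp(2x) ) dx = π²/6 − θ²/8, where the integral is a Lebesgue integral over the real variable x ∈ (0,∞) and exp, cos denote the real exponential and cosine. -/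
open MeasureTheory

namespace Stmt8Aux

open Real Set

/-- `∫₀^∞ x e^{-rx} dx = 1/r²`. -/
lemma integral_x_exp {r : ℝ} (hr : 0 < r) :
    ∫ x in Ioi (0:ℝ), x * Real.exp (-(r * x)) = 1 / r ^ 2 := by
  have h := Real.integral_rpow_mul_exp_neg_mul_Ioi (a := 2) (r := r) two_pos hr
  rw [Real.Gamma_two, mul_one] at h
  have h2 : ((1:ℝ) / r) ^ (2:ℝ) = 1 / r ^ 2 := by
    rw [show ((2:ℝ)) = ((2:ℕ):ℝ) by norm_num, Real.rpow_natCast, div_pow, one_pow]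
  rw [← h2, ← h]
  refine setIntegral_congr_fun measurableSet_Ioi fun x hx => ?_
  rw [show (2:ℝ) - 1 = 1 by norm_num, Real.rpow_one]

lemma integrableOn_x_exp {r : ℝ} (hr : 0 < r) :
    IntegrableOn (fun x => x * Real.exp (-(r * x))) (Ioi (0:ℝ)) := by
  have h := integrableOn_rpow_mul_exp_neg_mul_rpow (s := 1) (p := 1) (b := r)
    (by norm_num) one_pos hr
  refine h.congr_fun (fun x hx => ?_) measurableSet_Ioi
  simp [Real.rpow_one]

lemma neg_z_pow_re {x t : ℝ} (m : ℕ) :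
    (((-((Real.exp (-x) : ℝ) * Complex.exp (t * Complex.I))) ^ m).re)
      = (-1:ℝ)^m * (Real.exp (-(m * x)) * Real.cos (m * t)) := by
  have h1 : (-((Real.exp (-x) : ℝ) * Complex.exp (t * Complex.I))) ^ m
      = (((-1:ℝ)^m * Real.exp (-x)^m : ℝ) : ℂ) * Complex.exp ((m * t : ℝ) * Complex.I) := by
    rw [neg_pow, mul_pow, ← Complex.exp_nat_mul]
    push_cast
    ring_nf
  rw [h1, Complex.re_ofReal_mul, Complex.exp_ofReal_mul_I_re, ← Real.exp_nat_mul]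
  ring_nf

lemma hasSum_pointwise {t : ℝ} (ht0 : 0 ≤ t) (ht : t ≤ π/2) {x : ℝ} (hx : 0 < x) :
    HasSum (fun n : ℕ =>
        (2 * (-1:ℝ)^n * Real.cos (((n:ℝ)+1) * t)) * (x * Real.exp (-(((n:ℝ)+1) * x))))
      (x * (2 + 2 * Real.exp x * Real.cos t) /
        (1 + 2 * Real.exp x * Real.cos t + Real.exp (2*x))) := by
  set z : ℂ := (Real.exp (-x) : ℝ) * Complex.exp (t * Complex.I) with hz_def
  have hr : (0:ℝ) < Real.exp (-x) := Real.exp_pos _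
  have hznorm : ‖z‖ < 1 := by
    rw [hz_def, norm_mul, Complex.norm_real, Real.norm_eq_abs, abs_of_pos hr,
      Complex.norm_exp]
    have h0 : (↑t * Complex.I).re = 0 := by simp
    rw [h0, Real.exp_zero, mul_one]
    exact Real.exp_lt_one_iff.mpr (by linarith)
  have h1 : HasSum (fun n : ℕ => (-z) ^ n) (1 - -z)⁻¹ :=
    hasSum_geometric_of_norm_lt_one (by rwa [norm_neg])
  have h2 : HasSum (fun n : ℕ => (-z) ^ (n + 1))
      ((1 - -z)⁻¹ - ∑ i ∈ Finset.range 1, (-z) ^ i) :=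
    (hasSum_nat_add_iff' 1).mpr h1
  have h3 := (Complex.hasSum_re h2).mul_left (-2 * x)
  have hre : ∀ n : ℕ, (-2 * x) * (((-z) ^ (n + 1)).re)
      = (2 * (-1:ℝ)^n * Real.cos (((n:ℝ)+1) * t)) * (x * Real.exp (-(((n:ℝ)+1) * x))) := by
    intro n
    rw [hz_def, neg_z_pow_re (x := x) (t := t) (n+1)]
    push_cast
    ring
  have c_nonneg : 0 ≤ Real.cos t := Real.cos_nonneg_of_mem_Icc ⟨by linarith [Real.pi_pos], ht⟩
  have hval : (-2 * x) * (((1 - -z)⁻¹ - ∑ i ∈ Finset.range 1, (-z) ^ i).re)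
      = x * (2 + 2 * Real.exp x * Real.cos t) /
        (1 + 2 * Real.exp x * Real.cos t + Real.exp (2*x)) := by
    have hzre : z.re = Real.exp (-x) * Real.cos t := by
      rw [hz_def, Complex.re_ofReal_mul, Complex.exp_ofReal_mul_I_re]
    have hzim : z.im = Real.exp (-x) * Real.sin t := by
      rw [hz_def, Complex.im_ofReal_mul, Complex.exp_ofReal_mul_I_im]
    have hN : Complex.normSq (1 + z)
        = 1 + 2 * Real.exp (-x) * Real.cos t + Real.exp (-x) ^ 2 := by
      rw [Complex.normSq_apply]
      simp only [Complex.add_re, Complex.add_im, Complex.one_re, Complex.one_im, hzre, hzim]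
      nlinarith [Real.sin_sq_add_cos_sq t]
    have hre1 : ((1 + z)⁻¹).re = (1 + Real.exp (-x) * Real.cos t)
        / (1 + 2 * Real.exp (-x) * Real.cos t + Real.exp (-x) ^ 2) := by
      rw [Complex.inv_re, hN]
      congr 1
      simp [hzre]
    have h2x : Real.exp (2*x) = Real.exp x * Real.exp x := by rw [two_mul, Real.exp_add]
    rw [Finset.sum_range_one, pow_zero, sub_neg_eq_add, Complex.sub_re, Complex.one_re,
      hre1, h2x, Real.exp_neg]
    have hE : (0:ℝ) < Real.exp x := Real.exp_pos x
    have hN' : (0:ℝ) < 1 + 2 * (Real.exp x)⁻¹ * Real.cos t + ((Real.exp x)⁻¹) ^ 2 := by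
      positivity
    have hD' : (0:ℝ) < 1 + 2 * Real.exp x * Real.cos t + Real.exp x * Real.exp x := by
      positivity
    field_simp
    ring
  simp only [hre] at h3
  rwa [hval] at h3

lemma hasSum_coeffs {t : ℝ} (ht0 : 0 ≤ t) (ht : t ≤ π/2) :
    HasSum (fun n : ℕ => (2 * (-1:ℝ)^n * Real.cos (((n:ℝ)+1) * t)) * (1/((n:ℝ)+1)^2))
      (π^2/6 - t^2/2) := by
  have hπ : (0:ℝ) < π := Real.pi_pos
  set y : ℝ := t/(2*π) + 1/2 with hy_def
  have hy : y ∈ Icc (0:ℝ) 1 := by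
    constructor
    · have : 0 ≤ t/(2*π) := by positivity
      simp only [hy_def]; linarith
    · have : t/(2*π) ≤ 1/4 := by
        rw [div_le_div_iff₀ (by positivity) (by norm_num)]
        linarith
      simp only [hy_def]; linarith
  have h := hasSum_one_div_nat_pow_mul_cos (k := 1) one_ne_zero hy
  have hB : (Polynomial.map (algebraMap ℚ ℝ) (Polynomial.bernoulli (2*1))).eval y
      = y^2 - y + 1/6 := by
    have hb2 : bernoulli 2 = 1/6 := by rw [bernoulli]; norm_num [bernoulli'_two]
    norm_num [Polynomial.bernoulli, Finset.sum_range_succ, hb2]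
    ring
  rw [hB] at h
  have hcos : ∀ n : ℕ, Real.cos (2 * π * n * y) = (-1:ℝ)^n * Real.cos (n * t) := by
    intro n
    have : 2 * π * n * y = n * π - (-(n * t)) := by
      rw [hy_def]; field_simp; ring
    rw [this, Real.cos_nat_mul_pi_sub, Real.cos_neg]
  simp only [hcos] at h
  have h1 := (hasSum_nat_add_iff'
    (f := fun n : ℕ => 1/((n:ℝ))^(2*1) * ((-1:ℝ)^n * Real.cos (n * t))) 1).mpr h
  have h2 := h1.mul_left (-2)
  have h3 : HasSum (fun n : ℕ => (2 * (-1:ℝ)^n * Real.cos (((n:ℝ)+1) * t)) * (1/((n:ℝ)+1)^2))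
      (-2 * ((-1:ℝ) ^ (1 + 1) * (2 * π) ^ (2 * 1) / 2 / ((2 * 1).factorial : ℝ) * (y^2 - y + 1/6)
        - ∑ i ∈ Finset.range 1, 1/((i:ℝ))^(2*1) * ((-1:ℝ)^i * Real.cos (i * t)))) := by
    refine h2.congr_fun fun n => ?_
    push_cast
    ring
  convert h3 using 1
  rw [Finset.sum_range_one, hy_def]
  norm_num [Nat.factorial]
  field_simp
  ring

end Stmt8Aux

theorem stmt_8 (θ : ℝ) (hθ0 : 0 ≤ θ) (hθπ : θ ≤ Real.pi) :
    ∫ x in Set.Ioi (0 : ℝ),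
        x * (2 + 2 * Real.exp x * Real.cos (θ / 2)) /
          (1 + 2 * Real.exp x * Real.cos (θ / 2) + Real.exp (2 * x)) =
      Real.pi ^ 2 / 6 - θ ^ 2 / 8 := by
  have hπ : (0:ℝ) < Real.pi := Real.pi_pos
  set t : ℝ := θ / 2 with ht_def
  have ht0 : 0 ≤ t := by rw [ht_def]; linarith
  have ht : t ≤ Real.pi / 2 := by rw [ht_def]; linarith
  have hn1 : ∀ n : ℕ, (0:ℝ) < (n:ℝ) + 1 := fun n => by positivity
  have hF_int : ∀ n : ℕ, Integrable
      (fun x : ℝ => (2 * (-1:ℝ)^n * Real.cos (((n:ℝ)+1) * t)) * (x * Real.exp (-(((n:ℝ)+1) * x))))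
      (volume.restrict (Set.Ioi (0:ℝ))) := fun n =>
    (Stmt8Aux.integrableOn_x_exp (hn1 n)).const_mul _
  have hF_norm_eq : ∀ n : ℕ,
      (∫ x in Set.Ioi (0:ℝ),
        ‖(2 * (-1:ℝ)^n * Real.cos (((n:ℝ)+1) * t)) * (x * Real.exp (-(((n:ℝ)+1) * x)))‖)
      = |2 * (-1:ℝ)^n * Real.cos (((n:ℝ)+1) * t)| * (1/((n:ℝ)+1)^2) := by
    intro n
    rw [← Stmt8Aux.integral_x_exp (hn1 n), ← integral_const_mul _ _]
    refine setIntegral_congr_fun measurableSet_Ioi fun x hx => ?_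
    have hx' : (0:ℝ) < x := hx
    rw [Real.norm_eq_abs, abs_mul, abs_of_nonneg (by positivity : (0:ℝ) ≤ x * Real.exp (-(((n:ℝ)+1) * x)))]
  have hsum2 : Summable (fun n : ℕ => 2 * (1/((n:ℝ)+1)^2)) := by
    have h0 : Summable (fun n : ℕ => 1/((n:ℝ))^2) := Real.summable_one_div_nat_pow.mpr one_lt_two
    have h1 := (summable_nat_add_iff (f := fun n : ℕ => 1/((n:ℝ))^2) 1).mpr h0
    refine (h1.congr fun n => ?_).mul_left 2
    push_cast
    ring
  have hF_norm : Summable fun n : ℕ => ∫ x in Set.Ioi (0:ℝ),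
      ‖(2 * (-1:ℝ)^n * Real.cos (((n:ℝ)+1) * t)) * (x * Real.exp (-(((n:ℝ)+1) * x)))‖ := by
    simp only [hF_norm_eq]
    refine Summable.of_nonneg_of_le (fun n => by positivity) (fun n => ?_) hsum2
    have hc : |2 * (-1:ℝ)^n * Real.cos (((n:ℝ)+1) * t)| ≤ 2 := by
      rw [abs_mul, abs_mul, abs_two, abs_pow, abs_neg, abs_one, one_pow, mul_one]
      have := Real.abs_cos_le_one (((n:ℝ)+1) * t)
      nlinarith
    have : (0:ℝ) ≤ 1/((n:ℝ)+1)^2 := by positivity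
    nlinarith
  have H := MeasureTheory.hasSum_integral_of_summable_integral_norm hF_int hF_norm
  have hInt_eq : ∀ n : ℕ, (∫ x in Set.Ioi (0:ℝ),
      (2 * (-1:ℝ)^n * Real.cos (((n:ℝ)+1) * t)) * (x * Real.exp (-(((n:ℝ)+1) * x))))
      = (2 * (-1:ℝ)^n * Real.cos (((n:ℝ)+1) * t)) * (1/((n:ℝ)+1)^2) := by
    intro n
    rw [integral_const_mul _ _, Stmt8Aux.integral_x_exp (hn1 n)]
  simp only [hInt_eq] at H
  have h2 := Stmt8Aux.hasSum_coeffs ht0 ht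
  have hval : (∫ x in Set.Ioi (0:ℝ), ∑' n : ℕ,
      (2 * (-1:ℝ)^n * Real.cos (((n:ℝ)+1) * t)) * (x * Real.exp (-(((n:ℝ)+1) * x))))
      = Real.pi ^ 2 / 6 - t ^ 2 / 2 := H.unique h2
  have hcongr : (∫ x in Set.Ioi (0:ℝ),
        x * (2 + 2 * Real.exp x * Real.cos t) /
          (1 + 2 * Real.exp x * Real.cos t + Real.exp (2 * x)))
      = ∫ x in Set.Ioi (0:ℝ), ∑' n : ℕ,
        (2 * (-1:ℝ)^n * Real.cos (((n:ℝ)+1) * t)) * (x * Real.exp (-(((n:ℝ)+1) * x))) := by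
    refine setIntegral_congr_fun measurableSet_Ioi fun x hx => ?_
    exact ((Stmt8Aux.hasSum_pointwise ht0 ht hx).tsum_eq).symm
  rw [hcongr, hval, ht_def]
  ring
end

section
/- For every real θ with 0 < θ ≤ π, the function x ↦ 2x·arctan( sin(θ/2) / (cos(θ/2) + exp x) ) is Lebesgue integrable on (0,∞), and ∫₀^∞ 2x·arctan( sin(θ/2) / (cos(θ/2) + exp x) ) dx = π²·θ/12 − θ³/48. -/
open MeasureTheory

section Aux
open Set Real

lemma aux_integrable {a : ℝ} (ha : 0 < a) :
    IntegrableOn (fun x : ℝ => x * Real.exp (-(a * x))) (Set.Ioi 0) := by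
  have h := Real.GammaIntegral_convergent (s := 2) (by norm_num)
  rw [← mul_zero a, ← integrableOn_Ioi_comp_mul_left_iff _ _ ha] at h
  have h2 : IntegrableOn (fun x : ℝ => (1/a) * (Real.exp (-(a*x)) * (a*x) ^ ((2:ℝ)-1))) (Set.Ioi 0) := h.const_mul (1/a)
  refine h2.congr_fun (fun x hx => ?_) measurableSet_Ioi
  have hx' : (0:ℝ) < x := hx
  simp only [Real.rpow_one, show (2:ℝ) - 1 = 1 by norm_num]
  field_simp

lemma aux_integral {a : ℝ} (ha : 0 < a) :
    ∫ x in Set.Ioi (0:ℝ), x * Real.exp (-(a * x)) = 1 / a ^ 2 := by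
  have h := Real.integral_rpow_mul_exp_neg_mul_Ioi (a := 2) (r := a) (by norm_num) ha
  simp only [show (2:ℝ) - 1 = 1 by norm_num, Real.rpow_one] at h
  rw [h, Real.Gamma_two]
  rw [show ((1:ℝ)/a) ^ (2:ℝ) = ((1:ℝ)/a) ^ (2:ℕ) from Real.rpow_natCast _ 2]
  field_simp

lemma aux_arg {z : ℂ} (hz : 0 < z.re) : z.arg = Real.arctan (z.im / z.re) := by
  have h1 : |z.arg| < Real.pi / 2 := Complex.abs_arg_lt_pi_div_two_iff.2 (Or.inl hz)
  rw [abs_lt] at h1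
  rw [← Complex.tan_arg, Real.arctan_tan h1.1 h1.2]

lemma aux_arctan_le {u : ℝ} (hu : 0 ≤ u) : Real.arctan u ≤ u := by
  have h0 : 0 ≤ Real.arctan u := by simpa using Real.arctan_strictMono.monotone hu
  have h1 : Real.arctan u < Real.pi / 2 := Real.arctan_lt_pi_div_two u
  have := Real.le_tan h0 h1
  rwa [Real.tan_arctan] at this

lemma aux_pointwise {t x : ℝ} (ht0 : 0 < t) (ht : t ≤ Real.pi / 2) (hx : 0 < x) :
    HasSum (fun n : ℕ => (-1 : ℝ) ^ n * Real.sin ((n + 1) * t) / (n + 1) *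
        Real.exp (-((n + 1) * x)))
      (Real.arctan (Real.sin t / (Real.cos t + Real.exp x))) := by
  set w : ℂ := Complex.exp (-(x : ℂ) + t * Complex.I) with hw_def
  have hzre : (-(x : ℂ) + t * Complex.I).re = -x := by simp
  have hzim : (-(x : ℂ) + t * Complex.I).im = t := by simp
  have hw : ‖w‖ < 1 := by
    rw [hw_def, Complex.norm_exp, hzre]
    exact Real.exp_lt_one_iff.2 (by linarith)
  have H := Complex.hasSum_taylorSeries_log hw
  have Him := Complex.imCLM.hasSum H
  have H0 : (Complex.imCLM ((-1 : ℂ) ^ (0 + 1) * w ^ 0 / (0 : ℕ))) = 0 := by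
    simp
  have Hshift := (hasSum_nat_add_iff' (f := fun n : ℕ =>
      Complex.imCLM ((-1 : ℂ) ^ (n + 1) * w ^ n / (n : ℕ))) 1).2 Him
  simp only [Finset.range_one, Finset.sum_singleton, H0, sub_zero] at Hshift
  -- identify each term
  have hterm : ∀ n : ℕ,
      Complex.imCLM ((-1 : ℂ) ^ (n + 1 + 1) * w ^ (n + 1) / ((n + 1 : ℕ) : ℂ)) =
        (-1 : ℝ) ^ n * Real.sin ((n + 1) * t) / (n + 1) * Real.exp (-((n + 1) * x)) := by
    intro n
    have hpow : w ^ (n + 1) = Complex.exp ((n + 1 : ℕ) * (-(x : ℂ) + t * Complex.I)) := by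
      rw [Complex.exp_nat_mul]
    have h1 : ((-1 : ℂ) ^ (n + 1 + 1) * w ^ (n + 1) / ((n + 1 : ℕ) : ℂ)) =
        ((((-1 : ℝ) ^ (n + 1 + 1) / ((n + 1 : ℕ) : ℝ)) : ℝ) : ℂ) * w ^ (n + 1) := by
      push_cast
      ring
    rw [h1]
    rw [Complex.imCLM_apply]
    simp only [Complex.mul_im, Complex.ofReal_re, Complex.ofReal_im, zero_mul, add_zero]
    rw [hpow, Complex.exp_im]
    have hre : ((n + 1 : ℕ) * (-(x : ℂ) + t * Complex.I)).re = -((n + 1) * x) := by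
      simp
    have him : ((n + 1 : ℕ) * (-(x : ℂ) + t * Complex.I)).im = (n + 1) * t := by
      simp
    rw [hre, him]
    push_cast
    rw [pow_succ]
    ring
  -- identify the sum
  have hsum : (Complex.log (1 + w)).im =
      Real.arctan (Real.sin t / (Real.cos t + Real.exp x)) := by
    have hwre : w.re = Real.exp (-x) * Real.cos t := by
      rw [hw_def, Complex.exp_re, hzre, hzim]
    have hwim : w.im = Real.exp (-x) * Real.sin t := by
      rw [hw_def, Complex.exp_im, hzre, hzim]
    have hcos : 0 ≤ Real.cos t := Real.cos_nonneg_of_mem_Icc ⟨by linarith [Real.pi_pos], ht⟩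
    have hre1 : (0 : ℝ) < 1 + Real.exp (-x) * Real.cos t := by positivity
    have hre : (1 + w).re = 1 + Real.exp (-x) * Real.cos t := by
      simp [hwre]
    have him : (1 + w).im = Real.exp (-x) * Real.sin t := by simp [hwim]
    rw [Complex.log_im, aux_arg (by rw [hre]; exact hre1), hre, him]
    congr 1
    have he : Real.exp x ≠ 0 := (Real.exp_pos x).ne'
    have hd : Real.cos t + Real.exp x ≠ 0 := by positivity
    rw [div_eq_div_iff hre1.ne' hd, Real.exp_neg]
    field_simp
    ring
  have hfin : Complex.imCLM (Complex.log (1 + w)) =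
      Real.arctan (Real.sin t / (Real.cos t + Real.exp x)) := by
    rw [Complex.imCLM_apply]; exact hsum
  rw [hfin] at Hshift
  exact funext hterm ▸ Hshift
lemma bern3 (y : ℝ) : (Polynomial.map (algebraMap ℚ ℝ) (Polynomial.bernoulli 3)).eval y
    = y ^ 3 - 3 / 2 * y ^ 2 + 1 / 2 * y := by
  rw [Polynomial.eval_map]
  simp_rw [Polynomial.bernoulli, Finset.sum_range_succ, Finset.sum_range_zero,
    Polynomial.eval₂_add, Polynomial.eval₂_zero, Polynomial.eval₂_monomial]
  rw [bernoulli_one, bernoulli_eq_bernoulli'_of_ne_one zero_ne_one, bernoulli'_zero,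
    bernoulli_eq_bernoulli'_of_ne_one (by decide : 2 ≠ 1), bernoulli'_two,
    bernoulli_eq_bernoulli'_of_ne_one (by decide : 3 ≠ 1), bernoulli'_three]
  norm_num
  ring

set_option maxHeartbeats 1000000 in
lemma aux_series {t : ℝ} (ht0 : 0 < t) (ht : t ≤ Real.pi / 2) :
    HasSum (fun n : ℕ => 2 * ((-1 : ℝ) ^ n * Real.sin (((n : ℝ) + 1) * t)) / ((n : ℝ) + 1) ^ 3)
      (t * (Real.pi ^ 2 - t ^ 2) / 6) := by
  have hπ := Real.pi_pos
  set y : ℝ := (Real.pi - t) / (2 * Real.pi) with hy_def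
  have hy : y ∈ Set.Icc (0 : ℝ) 1 := by
    constructor
    · apply div_nonneg (by linarith) (by linarith)
    · rw [div_le_one (by linarith)]; linarith
  have Hs := hasSum_one_div_nat_pow_mul_sin (k := 1) one_ne_zero hy
  rw [(by norm_num : 2 * 1 + 1 = 3)] at Hs
  have hS : ((-1 : ℝ)) ^ (1 + 1) * (2 * Real.pi) ^ 3 / 2 / (Nat.factorial 3 : ℝ) *
      (Polynomial.map (algebraMap ℚ ℝ) (Polynomial.bernoulli 3)).eval y
      = t * (Real.pi ^ 2 - t ^ 2) / 12 := by
    rw [bern3, hy_def, (by norm_num [Nat.factorial] : (Nat.factorial 3 : ℝ) = 6)]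
    field_simp
    ring
  rw [hS] at Hs
  have Hs2 := (hasSum_nat_add_iff'
    (f := fun n : ℕ => 1 / (n : ℝ) ^ 3 * Real.sin (2 * Real.pi * n * y)) 1).2 Hs
  simp only [Finset.range_one, Finset.sum_singleton, Nat.cast_zero, Nat.cast_add, Nat.cast_one,
    mul_zero, zero_mul, Real.sin_zero, div_zero, one_div, sub_zero] at Hs2
  norm_num at Hs2
  have hterm : ∀ n : ℕ, (((n : ℝ) + 1) ^ 3)⁻¹ * Real.sin (2 * Real.pi * ((n : ℝ) + 1) * y)
      = ((-1 : ℝ) ^ n * Real.sin (((n : ℝ) + 1) * t)) / ((n : ℝ) + 1) ^ 3 := by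
    intro n
    have harg : 2 * Real.pi * ((n : ℝ) + 1) * y
        = ((n + 1 : ℕ) : ℝ) * Real.pi - ((n : ℝ) + 1) * t := by
      rw [hy_def]
      push_cast
      field_simp
    rw [harg, Real.sin_nat_mul_pi_sub]
    push_cast
    rw [pow_succ]
    ring
  have Hs3 := funext hterm ▸ Hs2
  have := Hs3.mul_left 2
  have hfun : (fun n : ℕ => 2 * ((-1 : ℝ) ^ n * Real.sin (((n : ℝ) + 1) * t)) / ((n : ℝ) + 1) ^ 3)
      = fun i : ℕ => 2 * ((-1 : ℝ) ^ i * Real.sin (((i : ℝ) + 1) * t) / ((i : ℝ) + 1) ^ 3) := by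
    funext n; ring
  rw [hfun, show t * (Real.pi ^ 2 - t ^ 2) / 6 = 2 * (t * (Real.pi ^ 2 - t ^ 2) / 12) by ring]
  exact this

end Aux


theorem stmt_9 (θ : ℝ) (hθ0 : 0 < θ) (hθπ : θ ≤ Real.pi) :
    IntegrableOn
        (fun x : ℝ => 2 * x * Real.arctan (Real.sin (θ / 2) / (Real.cos (θ / 2) + Real.exp x)))
        (Set.Ioi 0) ∧
      ∫ x in Set.Ioi (0 : ℝ),
          2 * x * Real.arctan (Real.sin (θ / 2) / (Real.cos (θ / 2) + Real.exp x)) =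
        Real.pi ^ 2 * θ / 12 - θ ^ 3 / 48 := by
  have hπ := Real.pi_pos
  set t : ℝ := θ / 2 with ht_def
  have ht0 : 0 < t := by rw [ht_def]; linarith
  have ht : t ≤ Real.pi / 2 := by rw [ht_def]; linarith
  have hcos : 0 ≤ Real.cos t := Real.cos_nonneg_of_mem_Icc ⟨by linarith, ht⟩
  have hsin1 : Real.sin t ≤ 1 := Real.sin_le_one t
  have hsin0 : 0 ≤ Real.sin t := Real.sin_nonneg_of_nonneg_of_le_pi ht0.le (by linarith)
  have hdenom : ∀ x : ℝ, 0 < Real.cos t + Real.exp x :=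
    fun x => add_pos_of_nonneg_of_pos hcos (Real.exp_pos x)
  set f : ℝ → ℝ := fun x => 2 * x * Real.arctan (Real.sin t / (Real.cos t + Real.exp x))
    with hf_def
  have hcont : Continuous f := by
    apply (continuous_const.mul continuous_id).mul
    exact Real.continuous_arctan.comp
      (continuous_const.div (continuous_const.add Real.continuous_exp)
        fun x => (hdenom x).ne')
  have hbound : ∀ x ∈ Set.Ioi (0:ℝ), ‖f x‖ ≤ ‖2 * (x * Real.exp (-(1 * x)))‖ := by
    intro x hx
    have hx0 : (0:ℝ) < x := hx
    have hu0 : 0 ≤ Real.sin t / (Real.cos t + Real.exp x) := div_nonneg hsin0 (hdenom x).le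
    have hu : Real.sin t / (Real.cos t + Real.exp x) ≤ Real.exp (-x) := by
      rw [Real.exp_neg, ← one_div]
      exact div_le_div₀ zero_le_one hsin1 (Real.exp_pos x) (le_add_of_nonneg_left hcos)
    have harc0 : 0 ≤ Real.arctan (Real.sin t / (Real.cos t + Real.exp x)) := by
      simpa using Real.arctan_strictMono.monotone hu0
    have harc : Real.arctan (Real.sin t / (Real.cos t + Real.exp x)) ≤ Real.exp (-x) :=
      le_trans (aux_arctan_le hu0) hu
    rw [hf_def]
    rw [Real.norm_eq_abs, Real.norm_eq_abs,
      abs_of_nonneg (mul_nonneg (by linarith) harc0),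
      abs_of_nonneg (by positivity)]
    simp only [one_mul]
    calc 2 * x * Real.arctan (Real.sin t / (Real.cos t + Real.exp x))
        ≤ 2 * x * Real.exp (-x) := by
          exact mul_le_mul_of_nonneg_left harc (by linarith)
      _ = 2 * (x * Real.exp (-x)) := by ring
  have hIntOn : IntegrableOn f (Set.Ioi 0) := by
    refine Integrable.mono ((aux_integrable one_pos).const_mul 2)
      hcont.aestronglyMeasurable.restrict ?_
    exact (ae_restrict_iff' measurableSet_Ioi).2 (Filter.Eventually.of_forall hbound)
  refine ⟨hIntOn, ?_⟩
  -- termwise series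
  set F : ℕ → ℝ → ℝ := fun n x =>
    (2 * ((-1:ℝ) ^ n * Real.sin (((n:ℝ) + 1) * t) / ((n:ℝ) + 1))) *
      (x * Real.exp (-(((n:ℝ) + 1) * x))) with hF_def
  have hnpos : ∀ n : ℕ, (0:ℝ) < (n:ℝ) + 1 := fun n => by positivity
  have hInt : ∀ n : ℕ, Integrable (F n) (volume.restrict (Set.Ioi 0)) :=
    fun n => (aux_integrable (hnpos n)).const_mul _
  have hIntval : ∀ n : ℕ, (∫ x in Set.Ioi (0:ℝ), F n x) =
      (2 * ((-1:ℝ) ^ n * Real.sin (((n:ℝ) + 1) * t) / ((n:ℝ) + 1))) * (1 / ((n:ℝ) + 1) ^ 2) := by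
    intro n
    rw [hF_def]
    rw [MeasureTheory.integral_const_mul, aux_integral (hnpos n)]
  have hNormval : ∀ n : ℕ, (∫ x in Set.Ioi (0:ℝ), ‖F n x‖) =
      |2 * ((-1:ℝ) ^ n * Real.sin (((n:ℝ) + 1) * t) / ((n:ℝ) + 1))| * (1 / ((n:ℝ) + 1) ^ 2) := by
    intro n
    rw [← aux_integral (hnpos n), ← MeasureTheory.integral_const_mul]
    refine setIntegral_congr_fun measurableSet_Ioi (fun x hx => ?_)
    have hx0 : (0:ℝ) < x := hx
    rw [Real.norm_eq_abs, hF_def]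
    rw [abs_mul, abs_of_nonneg (by positivity : (0:ℝ) ≤ x * Real.exp (-(((n:ℝ) + 1) * x)))]
  have habs_sin : ∀ u : ℝ, |Real.sin u| ≤ 1 :=
    fun u => abs_le.mpr ⟨Real.neg_one_le_sin u, Real.sin_le_one u⟩
  have hSummable : Summable (fun n : ℕ => ∫ x in Set.Ioi (0:ℝ), ‖F n x‖) := by
    have h0 : Summable (fun n : ℕ => 1 / ((n:ℝ)) ^ 3) := Real.summable_one_div_nat_pow.2 (by norm_num)
    have h1 := (summable_nat_add_iff 1).2 h0
    have h2 : (fun n : ℕ => 1 / (((n + 1 : ℕ)):ℝ) ^ 3) = fun n : ℕ => 1 / ((n:ℝ) + 1) ^ 3 := by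
      funext n; push_cast; ring
    have hs : Summable (fun n : ℕ => 2 * (1 / ((n:ℝ) + 1) ^ 3)) := (h2 ▸ h1).mul_left 2
    refine Summable.of_nonneg_of_le (fun n => ?_) (fun n => ?_) hs
    · exact integral_nonneg fun x => norm_nonneg _
    · rw [hNormval n]
      have h3 : |(-1:ℝ) ^ n * Real.sin (((n:ℝ) + 1) * t) / ((n:ℝ) + 1)| ≤ 1 / ((n:ℝ) + 1) := by
        rw [abs_div, abs_mul, abs_pow, abs_neg, abs_one, one_pow, one_mul,
          abs_of_pos (hnpos n)]
        exact (div_le_div_iff_of_pos_right (hnpos n)).2 (habs_sin _)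
      have h4 : |2 * ((-1:ℝ) ^ n * Real.sin (((n:ℝ) + 1) * t) / ((n:ℝ) + 1))| ≤ 2 / ((n:ℝ) + 1) := by
        rw [abs_mul, abs_two]
        calc 2 * |(-1:ℝ) ^ n * Real.sin (((n:ℝ) + 1) * t) / ((n:ℝ) + 1)|
            ≤ 2 * (1 / ((n:ℝ) + 1)) := by linarith [h3]
          _ = 2 / ((n:ℝ) + 1) := by ring
      calc |2 * ((-1:ℝ) ^ n * Real.sin (((n:ℝ) + 1) * t) / ((n:ℝ) + 1))| * (1 / ((n:ℝ) + 1) ^ 2)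
          ≤ (2 / ((n:ℝ) + 1)) * (1 / ((n:ℝ) + 1) ^ 2) :=
            mul_le_mul_of_nonneg_right h4 (by positivity)
        _ = 2 * (1 / ((n:ℝ) + 1) ^ 3) := by
            have ha := (hnpos n).ne'
            field_simp
  have key := MeasureTheory.hasSum_integral_of_summable_integral_norm hInt hSummable
  rw [funext hIntval] at key
  have hfun2 : (fun n : ℕ =>
      (2 * ((-1:ℝ) ^ n * Real.sin (((n:ℝ) + 1) * t) / ((n:ℝ) + 1))) * (1 / ((n:ℝ) + 1) ^ 2)) =
      fun n : ℕ => 2 * ((-1:ℝ) ^ n * Real.sin (((n:ℝ) + 1) * t)) / ((n:ℝ) + 1) ^ 3 := by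
    funext n
    have ha := (hnpos n).ne'
    field_simp
  rw [hfun2] at key
  have hval : (∫ x in Set.Ioi (0:ℝ), ∑' n, F n x) = t * (Real.pi ^ 2 - t ^ 2) / 6 :=
    key.unique (aux_series ht0 ht)
  have hcongr : (∫ x in Set.Ioi (0:ℝ), f x) = ∫ x in Set.Ioi (0:ℝ), ∑' n, F n x := by
    refine setIntegral_congr_fun measurableSet_Ioi (fun x hx => ?_)
    have hx0 : (0:ℝ) < x := hx
    have hp := (aux_pointwise ht0 ht hx0).mul_left (2 * x)
    have hfun3 : (fun n : ℕ => (2 * x) *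
        ((-1:ℝ) ^ n * Real.sin (((n:ℝ) + 1) * t) / ((n:ℝ) + 1) *
          Real.exp (-(((n:ℝ) + 1) * x)))) = fun n => F n x := by
      funext n; rw [hF_def]; ring
    rw [hfun3] at hp
    exact hp.tsum_eq.symm
  rw [hcongr, hval, ht_def]
  ring
end
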